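/- Set P̃ := ι(P) and p̃_j := ι(p_j) for j = 1, 2, 3. Then: (i) the orthogonal complement K̃ := {v ∈ N : ⟨v, x⟩ = 0 for all x ∈ P̃} equals the ℤ-span of A_{2,10}, A_{2,11}, A_{2,12}; (ii) p̃₁ + (1/3)·Ẽ₁₀ ∈ N, p̃₂ − (1/3)·Ẽ₁₂ ∈ N, and p̃₃ − (1/3)·Ẽ₁₁ ∈ N. -/

import Mathlib

noncomputable section

abbrev F3 : Type := ZMod 3 × ZMod 3
abbrev IP : Type := F3 × Fin 2
abbrev VP : Type := IP → ℚ

/-- The basis vectors `E_t^(k)` (with `k : Fin 2` corresponding to `k+1 ∈ {1,2}`). -/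
def Ev (t : F3) (k : Fin 2) : VP := Pi.single (t, k) 1

/-- Gram coefficients of the bilinear form on `V`. -/
def GP : IP → IP → ℚ := fun i j =>
  if i.1 = j.1 then (if i.2 = j.2 then -2 else 1) else 0

/-- The symmetric bilinear form on `V`. -/
def BP (x y : VP) : ℚ := ∑ i : IP, ∑ j : IP, x i * GP i j * y j

lemma BP_add_left (a b x : VP) : BP (a + b) x = BP a x + BP b x := by
  simp only [BP, Pi.add_apply, add_mul, Finset.sum_add_distrib]

lemma BP_zsmul_left (c : ℤ) (a x : VP) : BP (c • a) x = c * BP a x := by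
  simp only [BP, Pi.smul_apply, zsmul_eq_mul, Finset.mul_sum, mul_assoc]

lemma BP_zero_left (x : VP) : BP 0 x = 0 := by
  simp [BP]

/-- `E_t := E_t^(1) + 2·E_t^(2)`. -/
def EV (t : F3) : VP := Ev t 0 + 2 • Ev t 1

/-- The affine line in `𝔽₃²` through `p` with direction `d`. -/
def lineF (p d : F3) : Finset F3 := Finset.image (fun s : ZMod 3 => p + s • d) Finset.univ

def IsLine (L : Finset F3) : Prop := ∃ p d : F3, d ≠ 0 ∧ L = lineF p d

def AreParallel (L L' : Finset F3) : Prop :=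
  ∃ p p' d : F3, d ≠ 0 ∧ L = lineF p d ∧ L' = lineF p' d

/-- `e(L) := (1/3)·∑_{t∈L} E_t`. -/
def eL (L : Finset F3) : VP := (3 : ℚ)⁻¹ • ∑ t ∈ L, EV t

/-- Generators of the root lattice `R` of type `A₂⁹`. -/
def Rgen : Set VP := {x | ∃ t k, x = Ev t k}

/-- The root lattice `R`. -/
def Rlat : Submodule ℤ VP := Submodule.span ℤ Rgen

/-- The lattice `P`. -/
def Plat : Submodule ℤ VP :=
  Submodule.span ℤ (Rgen ∪ {x | ∃ L L', AreParallel L L' ∧ x = eL L - eL L'})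

/-- The dual lattice `Λ* = {v | ⟨v,λ⟩ ∈ ℤ for all λ ∈ Λ}`. -/
def dualP (Λ : Submodule ℤ VP) : Submodule ℤ VP where
  carrier := {v | ∀ x ∈ Λ, ∃ n : ℤ, BP v x = n}
  zero_mem' := fun x _ => ⟨0, by simp [BP_zero_left]⟩
  add_mem' := by
    intro a b ha hb x hx
    obtain ⟨n, hn⟩ := ha x hx
    obtain ⟨m, hm⟩ := hb x hx
    exact ⟨n + m, by rw [BP_add_left, hn, hm]; push_cast; ring⟩
  smul_mem' := by
    intro c v hv x hx
    obtain ⟨n, hn⟩ := hv x hx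
    exact ⟨c * n, by rw [BP_zsmul_left, hn]; push_cast; ring⟩

def L12 : Finset F3 := lineF (0, 0) (0, 1)
def L34 : Finset F3 := lineF (0, 0) (1, 0)
def L00 : Finset F3 := lineF (0, 0) (1, 1)

def p1 : VP := eL L34 + eL L00
def p2 : VP := eL L12 + eL L34
def p3 : VP := eL L12 + eL L00

def pv : Fin 3 → VP := ![p1, p2, p3]


abbrev JN : Type := Fin 12 × Fin 2
abbrev WN : Type := JN → ℚ

/-- The simple roots `Ẽ_j^(k)` (with `k : Fin 2` corresponding to `k+1 ∈ {1,2}`). -/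
def Et (j : Fin 12) (k : Fin 2) : WN := Pi.single (j, k) 1

/-- Gram coefficients of the (positive definite) bilinear form on `W`. -/
def GN : JN → JN → ℚ := fun i j =>
  if i.1 = j.1 then (if i.2 = j.2 then 2 else -1) else 0

/-- The symmetric bilinear form on `W`. -/
def BW (x y : WN) : ℚ := ∑ i : JN, ∑ j : JN, x i * GN i j * y j

/-- `Ẽ_j := Ẽ_j^(1) + 2·Ẽ_j^(2)`. -/
def EtV (j : Fin 12) : WN := Et j 0 + 2 • Et j 1

/-- The rows of the generating matrix of the glue code. -/
def glueMat : Fin 6 → Fin 12 → ℚ :=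
  ![![0, 1, 1, 1, 1, 1, 1, 0, 0, 0, 0, 0],
    ![-1, 0, 1, -1, -1, 1, 0, 1, 0, 0, 0, 0],
    ![-1, 1, 0, 1, -1, -1, 0, 0, 1, 0, 0, 0],
    ![-1, -1, 1, 0, 1, -1, 0, 0, 0, 1, 0, 0],
    ![-1, -1, -1, 1, 0, 1, 0, 0, 0, 0, 1, 0],
    ![-1, 1, -1, -1, 1, 0, 0, 0, 0, 0, 0, 1]]

/-- The glue vectors `w_i := (1/3)·∑_j a_{ij}·Ẽ_j`. -/
def wvec (i : Fin 6) : WN := (3 : ℚ)⁻¹ • ∑ j : Fin 12, glueMat i j • EtV j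

/-- The Niemeier lattice `N` of type `A₂¹²`. -/
def NL : Submodule ℤ WN :=
  Submodule.span ℤ ({x | ∃ j k, x = Et j k} ∪ Set.range wvec)

/-- The index of the `A₂`-block that `E_t` is sent to (0-indexed). -/
def iotaIdx : F3 → Fin 12 := fun t =>
  if t = (0, 0) then 5 else if t = (0, 1) then 3 else if t = (0, 2) then 6
  else if t = (1, 0) then 4 else if t = (1, 1) then 2 else if t = (1, 2) then 1
  else if t = (2, 0) then 7 else if t = (2, 1) then 0 else 8

/-- The sign with which `E_t^(ℓ)` is sent to `±Ẽ_{iotaIdx t}^(ℓ)`. -/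
def iotaSgn : F3 → ℚ := fun t => if t.1 = 1 then -1 else 1

/-- The ℚ-linear map `ι : P ⊗ ℚ → W` of the proposition. -/
def iota : VP →ₗ[ℚ] WN :=
  (Pi.basisFun ℚ IP).constr ℚ fun i => iotaSgn i.1 • Et (iotaIdx i.1) i.2

/-!
The lattice `ι(P)` lives on the blocks `A_{2,1}, …, A_{2,9}` of `N` and already contains
their simple roots, so by nondegeneracy of the `A₂` Gram matrix a vector orthogonal to `ι(P)`
vanishes on those blocks, while the blocks `A_{2,10}, A_{2,11}, A_{2,12}` are orthogonal to
everything `ι` hits. It remains to see that a vector of `N` supported on the last three blocks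
has integer coordinates. This holds because `N` is integral (the rows of the glue matrix are
pairwise orthogonal, of norm 6): among the last three blocks, `w₄, w₅, w₆` each meet exactly one,
with coefficient `1`, so pairing with them and with the simple roots reads off the coordinates.
Part (ii) consists of explicit identities expressing each vector as a combination of glue
vectors and roots. Blocks and glue vectors are indexed from `0` in the code: `A_{2,10}` is
block `9`, `w₄` is `wvec 3`.
-/

open Submodule in
theorem exists_int_eq_of_mem_span {M : Type*} [AddCommGroup M] (B : M →ₗ[ℤ] M →ₗ[ℤ] ℚ)
    {s : Set M} (hs : ∀ x ∈ s, ∀ y ∈ s, ∃ n : ℤ, B x y = n) {x y : M}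
    (hx : x ∈ span ℤ s) (hy : y ∈ span ℤ s) : ∃ n : ℤ, B x y = n := by
  have hle : map₂ B (span ℤ s) (span ℤ s) ≤ 1 := by
    rw [map₂_span_span, span_le]
    rintro _ ⟨a, ha, b, hb, rfl⟩
    obtain ⟨n, hn⟩ := hs a ha b hb
    exact mem_one.mpr ⟨n, by simp [hn]⟩
  obtain ⟨n, hn⟩ := mem_one.mp (hle (apply_mem_map₂ B hx hy))
  exact ⟨n, by simpa using hn.symm⟩

def BWₗ : WN →ₗ[ℚ] WN →ₗ[ℚ] ℚ := Matrix.toLinearMap₂' ℚ (Matrix.of GN)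

@[simp]
lemma BWₗ_apply (x y : WN) : BWₗ x y = BW x y := by
  simp only [BWₗ, Matrix.toLinearMap₂'_apply, BW, Matrix.of_apply, smul_eq_mul]
  exact Finset.sum_congr rfl fun i _ => Finset.sum_congr rfl fun j _ => by ring

lemma Et_apply (j : Fin 12) (k : Fin 2) (i : JN) : Et j k i = if i = (j, k) then 1 else 0 :=
  Pi.single_apply _ _ _

lemma BW_Et_Et (i j : Fin 12) (k l : Fin 2) : BW (Et i k) (Et j l) = GN (i, k) (j, l) := by
  simp [BW, Et_apply]

lemma BW_Et_right (v : WN) (j : Fin 12) (k : Fin 2) :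
    BW v (Et j k) = ∑ k', v (j, k') * GN (j, k') (j, k) := by
  simp only [BW, Et_apply, mul_ite, mul_one, mul_zero, Finset.sum_ite_eq', Finset.mem_univ,
    if_true, Fintype.sum_prod_type]
  rw [Finset.sum_eq_single j]
  · intro j' _ hj'
    simp [GN, hj']
  · simp

lemma BW_Et_zero_right (v : WN) (j : Fin 12) : BW v (Et j 0) = 2 * v (j, 0) - v (j, 1) := by
  simp only [BW_Et_right, Fin.sum_univ_two, GN, ↓reduceIte, one_ne_zero]
  ring

lemma BW_Et_one_right (v : WN) (j : Fin 12) : BW v (Et j 1) = 2 * v (j, 1) - v (j, 0) := by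
  simp only [BW_Et_right, Fin.sum_univ_two, GN, ↓reduceIte, zero_ne_one]
  ring

lemma BW_EtV_right (v : WN) (j : Fin 12) : BW v (EtV j) = 3 * v (j, 1) := by
  rw [← BWₗ_apply, EtV, map_add, map_nsmul, BWₗ_apply, BWₗ_apply, BW_Et_zero_right,
    BW_Et_one_right, nsmul_eq_mul]
  ring

lemma apply_eq_zero_of_BW_Et_eq_zero {v : WN} {j : Fin 12} (h : ∀ k, BW v (Et j k) = 0)
    (k : Fin 2) : v (j, k) = 0 := by
  have h0 := h 0
  have h1 := h 1
  rw [BW_Et_zero_right] at h0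
  rw [BW_Et_one_right] at h1
  match k with
  | 0 => linarith
  | 1 => linarith

lemma BW_eq_zero_of_disjoint (p : Fin 12 → Prop) {v x : WN} (hv : ∀ i : JN, ¬ p i.1 → v i = 0)
    (hx : ∀ i : JN, p i.1 → x i = 0) : BW v x = 0 := by
  refine Finset.sum_eq_zero fun i _ => Finset.sum_eq_zero fun i' _ => ?_
  by_cases hi : p i.1
  · by_cases hi' : p i'.1
    · simp [hx i' hi']
    · have : GN i i' = 0 := if_neg fun h : i.1 = i'.1 => hi' (h ▸ hi)
      simp [this]
  · simp [hv i hi]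

lemma mem_span_Et_of_exists_int (p : Fin 12 → Prop) {v : WN} (hv : ∀ i : JN, ¬ p i.1 → v i = 0)
    (hint : ∀ i, ∃ n : ℤ, v i = n) :
    v ∈ Submodule.span ℤ {x | ∃ j k, p j ∧ x = Et j k} := by
  rw [← Finset.univ_sum_single v]
  refine Submodule.sum_mem _ fun ⟨j, k⟩ _ => ?_
  by_cases hj : p j
  · obtain ⟨n, hn⟩ := hint (j, k)
    have : Pi.single (j, k) (v (j, k)) = n • Et j k := by
      ext i
      simp [Et_apply, Pi.single_apply, hn]
    rw [this]
    exact Submodule.smul_mem _ n (Submodule.subset_span ⟨j, k, hj, rfl⟩)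
  · simp [hv (j, k) hj]

lemma apply_eq_zero_of_mem_span_Et (p : Fin 12 → Prop) {v : WN}
    (hv : v ∈ Submodule.span ℤ {x | ∃ j k, p j ∧ x = Et j k}) (i : JN) (hi : ¬ p i.1) :
    v i = 0 := by
  induction hv using Submodule.span_induction with
  | mem x hx =>
    obtain ⟨j, k, hj, rfl⟩ := hx
    rw [Et_apply, if_neg]
    rintro rfl
    exact hi hj
  | zero => rfl
  | add x y _ _ hx hy => simp [hx, hy]
  | smul n x _ hx => simp [hx]

lemma glueMat_isInt (m : Fin 6) (j : Fin 12) : ∃ n : ℤ, glueMat m j = n :=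
  ⟨_, (Rat.coe_int_num_of_den_eq_one (by revert m j; decide)).symm⟩

lemma glueMat_orthogonal (m n : Fin 6) :
    ∑ j, glueMat m j * glueMat n j = if m = n then 6 else 0 := by
  fin_cases m <;> fin_cases n <;> norm_num [Fin.sum_univ_succ, glueMat]

lemma wvec_apply (m : Fin 6) (i : JN) : wvec m i = (3 : ℚ)⁻¹ * glueMat m i.1 * EtV i.1 i := by
  simp only [wvec, Pi.smul_apply, Finset.sum_apply, smul_eq_mul]
  rw [Finset.sum_eq_single i.1]
  · ring
  · intro j _ hj
    simp [EtV, Et_apply, Prod.ext_iff, Ne.symm hj]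
  · simp

lemma wvec_apply_zero (m : Fin 6) (j : Fin 12) : wvec m (j, 0) = glueMat m j / 3 := by
  have : EtV j (j, 0) = 1 := by simp [EtV, Et_apply]
  rw [wvec_apply, this]
  ring

lemma wvec_apply_one (m : Fin 6) (j : Fin 12) : wvec m (j, 1) = 2 * glueMat m j / 3 := by
  have : EtV j (j, 1) = 2 := by simp [EtV, Et_apply]
  rw [wvec_apply, this]
  ring

lemma BW_wvec_right (v : WN) (m : Fin 6) : BW v (wvec m) = ∑ j, glueMat m j * v (j, 1) := by
  rw [← BWₗ_apply, wvec, map_smul, map_sum]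
  simp only [map_smul, BWₗ_apply, BW_EtV_right, smul_eq_mul, Finset.mul_sum]
  exact Finset.sum_congr rfl fun j _ => by ring

lemma BW_wvec_Et (m : Fin 6) (j : Fin 12) (k : Fin 2) :
    BW (wvec m) (Et j k) = if k = 1 then glueMat m j else 0 := by
  match k with
  | 0 =>
    rw [BW_Et_zero_right, wvec_apply_zero, wvec_apply_one, if_neg zero_ne_one]
    ring
  | 1 =>
    rw [BW_Et_one_right, wvec_apply_zero, wvec_apply_one, if_pos rfl]
    ring

lemma BW_Et_wvec (m : Fin 6) (j : Fin 12) (k : Fin 2) :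
    BW (Et j k) (wvec m) = if k = 1 then glueMat m j else 0 := by
  fin_cases k <;> simp [BW_wvec_right, Et_apply]

lemma BW_wvec_wvec (m n : Fin 6) : BW (wvec m) (wvec n) = if m = n then 4 else 0 := by
  have h : ∀ j, glueMat n j * wvec m (j, 1) = 2 / 3 * (glueMat m j * glueMat n j) := fun j => by
    rw [wvec_apply_one]; ring
  rw [BW_wvec_right, Finset.sum_congr rfl fun j _ => h j, ← Finset.mul_sum, glueMat_orthogonal]
  split_ifs <;> norm_num

def NLgen : Set WN := {x | ∃ j k, x = Et j k} ∪ Set.range wvec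

lemma Et_mem_NL (j : Fin 12) (k : Fin 2) : Et j k ∈ NL :=
  Submodule.subset_span (Or.inl ⟨j, k, rfl⟩)

lemma wvec_mem_NL (m : Fin 6) : wvec m ∈ NL :=
  Submodule.subset_span (Or.inr ⟨m, rfl⟩)

lemma exists_int_BW_of_mem_NLgen {x y : WN} (hx : x ∈ NLgen) (hy : y ∈ NLgen) :
    ∃ n : ℤ, BW x y = n := by
  rcases hx with ⟨i, k, rfl⟩ | ⟨m, rfl⟩ <;> rcases hy with ⟨j, l, rfl⟩ | ⟨n, rfl⟩
  · rw [BW_Et_Et, GN]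
    split_ifs
    exacts [⟨2, by norm_num⟩, ⟨-1, by norm_num⟩, ⟨0, by norm_num⟩]
  · rw [BW_Et_wvec]
    split_ifs
    exacts [glueMat_isInt n i, ⟨0, by norm_num⟩]
  · rw [BW_wvec_Et]
    split_ifs
    exacts [glueMat_isInt m j, ⟨0, by norm_num⟩]
  · rw [BW_wvec_wvec]
    split_ifs
    exacts [⟨4, by norm_num⟩, ⟨0, by norm_num⟩]

lemma exists_int_BW_of_mem_NL {x y : WN} (hx : x ∈ NL) (hy : y ∈ NL) : ∃ n : ℤ, BW x y = n := by
  simpa using exists_int_eq_of_mem_span (BWₗ.restrictScalars₁₂ ℤ ℤ)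
    (fun x hx y hy => by simpa using exists_int_BW_of_mem_NLgen hx hy) hx hy

lemma exists_BW_wvec_eq {v : WN} (hv : ∀ i : JN, (i.1 : ℕ) < 9 → v i = 0) {j : Fin 12}
    (hj : 9 ≤ (j : ℕ)) : ∃ m, BW v (wvec m) = v (j, 1) := by
  obtain rfl | rfl | rfl : j = 9 ∨ j = 10 ∨ j = 11 := by revert j; decide
  · exact ⟨3, by simp [BW_wvec_right, Fin.sum_univ_succ, glueMat, hv]⟩
  · exact ⟨4, by simp [BW_wvec_right, Fin.sum_univ_succ, glueMat, hv]⟩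
  · exact ⟨5, by simp [BW_wvec_right, Fin.sum_univ_succ, glueMat, hv]⟩

lemma exists_int_apply_of_mem_NL {v : WN} (hvN : v ∈ NL) (hv : ∀ i : JN, (i.1 : ℕ) < 9 → v i = 0)
    (i : JN) : ∃ n : ℤ, v i = n := by
  obtain ⟨j, k⟩ := i
  by_cases hj : (j : ℕ) < 9
  · exact ⟨0, by simp [hv (j, k) hj]⟩
  obtain ⟨a, ha⟩ : ∃ a : ℤ, v (j, 1) = a := by
    obtain ⟨m, hm⟩ := exists_BW_wvec_eq hv (not_lt.mp hj)
    exact hm ▸ exists_int_BW_of_mem_NL hvN (wvec_mem_NL m)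
  obtain ⟨b, hb⟩ := exists_int_BW_of_mem_NL hvN (Et_mem_NL j 1)
  match k with
  | 0 => exact ⟨2 * a - b, by rw [BW_Et_one_right, ha] at hb; push_cast; linarith⟩
  | 1 => exact ⟨a, ha⟩

lemma iota_Ev (t : F3) (k : Fin 2) : iota (Ev t k) = iotaSgn t • Et (iotaIdx t) k := by
  rw [iota, Ev, ← Pi.basisFun_apply, Module.Basis.constr_basis]

lemma iota_EV (t : F3) : iota (EV t) = iotaSgn t • EtV (iotaIdx t) := by
  simp only [EV, map_add, map_nsmul, iota_Ev, EtV, smul_add, smul_comm (iotaSgn t)]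

lemma iotaSgn_ne_zero (t : F3) : iotaSgn t ≠ 0 := by
  unfold iotaSgn
  split_ifs <;> norm_num

lemma iotaIdx_lt (t : F3) : (iotaIdx t : ℕ) < 9 := by
  revert t
  decide

lemma exists_iotaIdx_eq {j : Fin 12} (hj : (j : ℕ) < 9) : ∃ t, iotaIdx t = j := by
  revert j
  decide

lemma iota_apply_eq_zero (y : VP) (i : JN) (hi : ¬ (i.1 : ℕ) < 9) : iota y i = 0 := by
  rw [iota, Module.Basis.constr_apply_fintype, Finset.sum_apply]
  refine Finset.sum_eq_zero fun x _ => ?_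
  have hne : i ≠ (iotaIdx x.1, x.2) := by
    rintro rfl
    exact hi (iotaIdx_lt x.1)
  simp [Et_apply, hne]

lemma apply_eq_zero_of_orthogonal {v : WN}
    (hv : ∀ x ∈ Submodule.map (iota.restrictScalars ℤ) Plat, BW v x = 0) (i : JN)
    (hi : (i.1 : ℕ) < 9) : v i = 0 := by
  obtain ⟨j, k⟩ := i
  obtain ⟨t, rfl⟩ := exists_iotaIdx_eq hi
  refine apply_eq_zero_of_BW_Et_eq_zero (fun k => ?_) k
  have h := hv _ ⟨Ev t k, Submodule.subset_span (Or.inl ⟨t, k, rfl⟩), rfl⟩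
  rw [LinearMap.restrictScalars_apply, iota_Ev, ← BWₗ_apply, map_smul, smul_eq_mul,
    BWₗ_apply] at h
  exact (mul_eq_zero.mp h).resolve_left (iotaSgn_ne_zero t)

lemma iota_eL (L : Finset F3) :
    iota (eL L) = (3 : ℚ)⁻¹ • ∑ t ∈ L, iotaSgn t • EtV (iotaIdx t) := by
  simp only [eL, map_smul, map_sum, iota_EV]

lemma L12_eq : L12 = {(0, 0), (0, 1), (0, 2)} := by decide

lemma L34_eq : L34 = {(0, 0), (1, 0), (2, 0)} := by decide

lemma L00_eq : L00 = {(0, 0), (1, 1), (2, 2)} := by decide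

lemma iota_eL12 : iota (eL L12) = (3 : ℚ)⁻¹ • (EtV 5 + EtV 3 + EtV 6) := by
  rw [iota_eL, L12_eq, Finset.sum_insert (by decide), Finset.sum_pair (by decide)]
  simp +decide only [iotaSgn, iotaIdx, ↓reduceIte, one_smul, smul_add, add_assoc]

lemma iota_eL34 : iota (eL L34) = (3 : ℚ)⁻¹ • (EtV 5 - EtV 4 + EtV 7) := by
  rw [iota_eL, L34_eq, Finset.sum_insert (by decide), Finset.sum_pair (by decide)]
  simp +decide only [iotaSgn, iotaIdx, ↓reduceIte, one_smul, neg_smul]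
  module

lemma iota_eL00 : iota (eL L00) = (3 : ℚ)⁻¹ • (EtV 5 - EtV 2 + EtV 8) := by
  rw [iota_eL, L00_eq, Finset.sum_insert (by decide), Finset.sum_pair (by decide)]
  simp +decide only [iotaSgn, iotaIdx, ↓reduceIte, one_smul, neg_smul]
  module

lemma iota_p1_add_eq : iota p1 + (3 : ℚ)⁻¹ • EtV 9
    = wvec 1 + wvec 2 + wvec 3 + (EtV 0 - EtV 2 + EtV 5) := by
  simp only [p1, map_add, iota_eL34, iota_eL00, wvec, glueMat, Fin.sum_univ_succ, Fin.sum_univ_zero,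
    Fin.succ_zero_eq_one, Fin.succ_one_eq_two, Fin.reduceSucc, Matrix.cons_val]
  module

lemma iota_p2_sub_eq : iota p2 - (3 : ℚ)⁻¹ • EtV 11
    = wvec 0 + wvec 1 + (2 : ℤ) • wvec 5 + (EtV 0 - EtV 1 + EtV 3 - EtV 4 - EtV 11) := by
  simp only [p2, map_add, iota_eL12, iota_eL34, wvec, glueMat, Fin.sum_univ_succ, Fin.sum_univ_zero,
    Fin.succ_zero_eq_one, Fin.succ_one_eq_two, Fin.reduceSucc, Matrix.cons_val]
  module

lemma iota_p3_sub_eq : iota p3 - (3 : ℚ)⁻¹ • EtV 10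
    = wvec 0 + wvec 2 + (2 : ℤ) • wvec 4 + (EtV 0 - EtV 3 - EtV 10) := by
  simp only [p3, map_add, iota_eL12, iota_eL00, wvec, glueMat, Fin.sum_univ_succ, Fin.sum_univ_zero,
    Fin.succ_zero_eq_one, Fin.succ_one_eq_two, Fin.reduceSucc, Matrix.cons_val]
  module

theorem statement9 :
    -- (i) the orthogonal complement K̃ of P̃ = ι(P) in N is the ℤ-span of A_{2,10}, A_{2,11}, A_{2,12}
    ({v | v ∈ NL ∧ ∀ x ∈ Submodule.map (iota.restrictScalars ℤ) Plat, BW v x = 0} =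
      (Submodule.span ℤ {x | ∃ (j : Fin 12) (k : Fin 2), 9 ≤ (j : ℕ) ∧ x = Et j k} : Set WN)) ∧
    -- (ii) glue-vector memberships
    (iota p1 + (3 : ℚ)⁻¹ • EtV 9 ∈ NL) ∧
    (iota p2 - (3 : ℚ)⁻¹ • EtV 11 ∈ NL) ∧
    (iota p3 - (3 : ℚ)⁻¹ • EtV 10 ∈ NL) := by
  refine ⟨?_, ?_, ?_, ?_⟩
  · ext v
    constructor
    · rintro ⟨hvN, hvP⟩
      have hv := apply_eq_zero_of_orthogonal hvP
      exact mem_span_Et_of_exists_int (fun j => 9 ≤ (j : ℕ)) (fun i hi => hv i (not_le.mp hi))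
        (exists_int_apply_of_mem_NL hvN hv)
    · intro hv
      refine ⟨Submodule.span_le.mpr ?_ hv, ?_⟩
      · rintro _ ⟨j, k, -, rfl⟩
        exact Et_mem_NL j k
      · rintro _ ⟨y, -, rfl⟩
        exact BW_eq_zero_of_disjoint (fun j => 9 ≤ (j : ℕ)) (apply_eq_zero_of_mem_span_Et _ hv)
          fun i hi => iota_apply_eq_zero y i (not_lt.mpr hi)
  · rw [iota_p1_add_eq]
    apply_rules [add_mem, sub_mem, zsmul_mem, nsmul_mem, wvec_mem_NL, Et_mem_NL]
  · rw [iota_p2_sub_eq]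
    apply_rules [add_mem, sub_mem, zsmul_mem, nsmul_mem, wvec_mem_NL, Et_mem_NL]
  · rw [iota_p3_sub_eq]
    apply_rules [add_mem, sub_mem, zsmul_mem, nsmul_mem, wvec_mem_NL, Et_mem_NL]
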